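/- For every $u \in \sigma^\vee \cap M$, there exist unique nonnegative integers $b_{ij}$ ($1 \leq i \leq l$, $1 \leq j \leq d$) with $\min_j b_{ij} = 0$ for each $i$ such that $u = \varphi(u)\epsilon + \sum_{i,j} b_{ij} e_{ij}$ in $M$; that is, $u$ has such a representation with all $b_{ij} \in \mathbf{Z}_{\geq 0}$, and this representation is unique. -/

import Mathlib

/-- Standard basis vector `e_{ij}` of `ℝ^{ld}`. -/
def eR (l d : ℕ) (p : Fin l × Fin d) : Fin l × Fin d → ℝ := Pi.single p 1

/-- `ε_i = e_{i1} + ⋯ + e_{id}`. -/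
def epsR (l d : ℕ) (i : Fin l) : Fin l × Fin d → ℝ := ∑ j, eR l d (i, j)

/-- The real span of the relations `ε_i - ε_{i'}`. -/
def LR (l d : ℕ) : Submodule ℝ (Fin l × Fin d → ℝ) :=
  Submodule.span ℝ (Set.range fun p : Fin l × Fin l => epsR l d p.1 - epsR l d p.2)

/-- `M_ℝ = ℝ^{ld} / L_ℝ`. -/
abbrev MR (l d : ℕ) := (Fin l × Fin d → ℝ) ⧸ LR l d

/-- Image of `e_{ij}` in `M_ℝ`. -/
noncomputable def ebar (l d : ℕ) (p : Fin l × Fin d) : MR l d := (LR l d).mkQ (eR l d p)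

/-- The common image `ε` of the `ε_i` in `M_ℝ`. -/
noncomputable def epsbar (l d : ℕ) (hl : 0 < l) : MR l d :=
  (LR l d).mkQ (epsR l d ⟨0, hl⟩)

/-- The cone `σ^∨ ⊆ M_ℝ` spanned by the images of the `e_{ij}`. -/
def sigmaDual (l d : ℕ) : Set (MR l d) :=
  {x | ∃ c : Fin l × Fin d → ℝ, (∀ p, 0 ≤ c p) ∧ x = ∑ p, c p • ebar l d p}

/-- Standard basis vector `e_{ij}` of `ℤ^{ld}`. -/
def eZ (l d : ℕ) (p : Fin l × Fin d) : Fin l × Fin d → ℤ := Pi.single p 1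

/-- `ε_i = e_{i1} + ⋯ + e_{id}` over `ℤ`. -/
def epsZ (l d : ℕ) (i : Fin l) : Fin l × Fin d → ℤ := ∑ j, eZ l d (i, j)

/-- The subgroup `L = ⟨ε_i - ε_{i'}⟩` of `ℤ^{ld}`. -/
def Lsub (l d : ℕ) : Submodule ℤ (Fin l × Fin d → ℤ) :=
  Submodule.span ℤ (Set.range fun p : Fin l × Fin l => epsZ l d p.1 - epsZ l d p.2)

/-- The lattice `M = ℤ^{ld}/L`. -/
abbrev Mq (l d : ℕ) := (Fin l × Fin d → ℤ) ⧸ Lsub l d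

/-- `φ(u) = ∑_i min_j a_{ij}` for a lattice point `u` represented by `a`. -/
def phiZ (l d : ℕ) (hd : 0 < d) (a : Fin l × Fin d → ℤ) : ℤ :=
  ∑ i : Fin l, Finset.univ.inf' (Finset.univ_nonempty_iff.mpr ⟨⟨0, hd⟩⟩) (fun j => a (i, j))

lemma epsZ_apply (l d : ℕ) (i : Fin l) (q : Fin l × Fin d) :
    epsZ l d i q = if q.1 = i then 1 else 0 := by
  by_cases h : q.1 = i <;>
    simp [epsZ, eZ, Finset.sum_apply, Pi.single_apply, Prod.ext_iff, h]

lemma sum_smul_eZ (l d : ℕ) (c : Fin l × Fin d → ℤ) :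
    ∑ p, c p • eZ l d p = c := by
  unfold eZ
  simp [← Pi.single_smul, Finset.univ_sum_single]

lemma mem_Lsub_prop (l d : ℕ) (x : Fin l × Fin d → ℤ) (hx : x ∈ Lsub l d) :
    (∀ i j j', x (i, j) = x (i, j')) ∧ ∑ p, x p = 0 := by
  induction hx using Submodule.span_induction with
  | mem y hy =>
    obtain ⟨⟨i, i'⟩, rfl⟩ := hy
    refine ⟨fun i'' j j' => by simp [epsZ_apply], ?_⟩
    rw [Fintype.sum_prod_type]
    simp [epsZ_apply, Finset.sum_sub_distrib, apply_ite (Finset.card), apply_ite (Nat.cast : ℕ → ℤ), Finset.sum_ite_eq']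
  | zero => simp
  | add u v _ _ hu hv =>
    exact ⟨fun i j j' => by simp [hu.1 i j j', hv.1 i j j'],
      by simp [Finset.sum_add_distrib, hu.2, hv.2]⟩
  | smul r u _ hu =>
    exact ⟨fun i j j' => by simp [hu.1 i j j'],
      by simp [← Finset.mul_sum, hu.2]⟩

lemma eq_iff_lem (l d : ℕ) (hl' : 0 < l) (a b : Fin l × Fin d → ℤ) (c : ℤ) :
    (Lsub l d).mkQ a
        = c • (Lsub l d).mkQ (epsZ l d ⟨0, hl'⟩) + ∑ p, b p • (Lsub l d).mkQ (eZ l d p)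
      ↔ a - (c • epsZ l d ⟨0, hl'⟩ + b) ∈ Lsub l d := by
  have h1 : ∑ p, b p • (Lsub l d).mkQ (eZ l d p) = (Lsub l d).mkQ b := by
    simp only [← map_smul, ← map_sum, sum_smul_eZ]
  rw [h1, ← map_smul, ← map_add, Submodule.mkQ_apply, Submodule.mkQ_apply,
    Submodule.Quotient.eq]

/-- Every `u ∈ σ^∨ ∩ M` has a unique expression `u = φ(u)·ε + ∑ b_{ij} e_{ij}` with all
`b_{ij}` nonnegative integers. -/
theorem stmt_10 (l d : ℕ) (hl : 2 ≤ l) (hd : 2 ≤ d)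
    (a : Fin l × Fin d → ℤ)
    (hcone : (LR l d).mkQ (fun p => (a p : ℝ)) ∈ sigmaDual l d) :
    ∃! b : Fin l × Fin d → ℤ, (∀ p, 0 ≤ b p) ∧
      (Lsub l d).mkQ a
        = phiZ l d (by omega) a • (Lsub l d).mkQ (epsZ l d ⟨0, by omega⟩)
          + ∑ p, b p • (Lsub l d).mkQ (eZ l d p) := by
  have hd' : 0 < d := by omega
  have hl' : 0 < l := by omega
  set m : Fin l → ℤ :=
    fun i => Finset.univ.inf' (Finset.univ_nonempty_iff.mpr ⟨⟨0, hd'⟩⟩) (fun j => a (i, j))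
    with hm
  have hphi : phiZ l d hd' a = ∑ i, m i := rfl
  set b₀ : Fin l × Fin d → ℤ := fun p => a p - m p.1 with hb₀
  have hb₀nn : ∀ p, 0 ≤ b₀ p := by
    intro p
    have : m p.1 ≤ a (p.1, p.2) :=
      Finset.inf'_le (fun j => a (p.1, j)) (Finset.mem_univ p.2)
    simpa [hb₀] using this
  -- attained minima
  have hatt : ∀ i : Fin l, ∃ j, b₀ (i, j) = 0 := by
    intro i
    obtain ⟨j, _, hj⟩ := Finset.exists_mem_eq_inf'
      (Finset.univ_nonempty_iff.mpr ⟨⟨0, hd'⟩⟩) (fun j => a (i, j))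
    exact ⟨j, by simp [hb₀, ← hj]; exact sub_self _⟩
  have hkey : a - ((∑ i, m i) • epsZ l d ⟨0, hl'⟩ + b₀) ∈ Lsub l d := by
    have heq : a - ((∑ i, m i) • epsZ l d ⟨0, hl'⟩ + b₀)
        = ∑ i, m i • (epsZ l d i - epsZ l d ⟨0, hl'⟩) := by
      funext q
      simp only [Pi.sub_apply, Pi.add_apply, Pi.smul_apply, smul_eq_mul, Finset.sum_apply,
        epsZ_apply, hb₀, mul_sub, Finset.sum_sub_distrib, mul_ite, mul_one, mul_zero]
      by_cases h : q.1 = (⟨0, hl'⟩ : Fin l) <;> simp [h, Finset.sum_ite_eq] <;> ring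
    rw [heq]
    exact Submodule.sum_mem _ fun i _ => Submodule.smul_mem _ _
      (Submodule.subset_span ⟨(i, ⟨0, hl'⟩), rfl⟩)
  refine ⟨b₀, ⟨hb₀nn, ?_⟩, ?_⟩
  · rw [eq_iff_lem l d hl', hphi]
    exact hkey
  · rintro b' ⟨hb'nn, hb'eq⟩
    rw [eq_iff_lem l d hl', hphi] at hb'eq
    have hdiff : b' - b₀ ∈ Lsub l d := by
      have := Submodule.sub_mem _ hkey hb'eq
      simpa using this
    obtain ⟨hrow, hsum⟩ := mem_Lsub_prop l d _ hdiff
    -- each row of b' - b₀ is a constant t i ≥ 0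
    choose j₀ hj₀ using hatt
    have hnn : ∀ i, 0 ≤ (b' - b₀) (i, j₀ i) := by
      intro i
      simp [hj₀ i, hb'nn (i, j₀ i)]
    have hsum' : ∑ i, (d : ℤ) * (b' - b₀) (i, j₀ i) = 0 := by
      rw [← hsum, Fintype.sum_prod_type]
      congr 1; funext i
      rw [Finset.sum_congr rfl fun j _ => hrow i j (j₀ i)]
      simp [mul_comm]; ring
    have hzero : ∀ i, (b' - b₀) (i, j₀ i) = 0 := by
      intro i
      have h := (Finset.sum_eq_zero_iff_of_nonneg
        (fun i _ => mul_nonneg (by positivity) (hnn i))).mp hsum' i (Finset.mem_univ i)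
      have hd0 : (d : ℤ) ≠ 0 := by exact_mod_cast hd'.ne'
      exact (mul_eq_zero.mp h).resolve_left hd0
    funext p
    obtain ⟨i, j⟩ := p
    have := hrow i j (j₀ i)
    have h0 := hzero i
    simp only [Pi.sub_apply] at this h0
    omega
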